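/- Realizability of orbital elements: let μ > 0 and let h, e ∈ ℝ³ satisfy h ≠ 0 and h · e = 0. Then there exist vectors r₀, v₀ ∈ ℝ³ with r₀ ≠ 0 such that r₀ × v₀ = h and (v₀ × h)/μ − r₀/|r₀| = e; i.e., every pair of mutually orthogonal vectors with nonzero angular momentum arises as the angular momentum and eccentricity vector of some initial position and velocity. -/

import Mathlib

open scoped InnerProductSpace

/-- Cross product in ℝ³ (modelled as `EuclideanSpace ℝ (Fin 3)`). -/
noncomputable def cross3 (a b : EuclideanSpace ℝ (Fin 3)) : EuclideanSpace ℝ (Fin 3) :=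
  (WithLp.equiv 2 (Fin 3 → ℝ)).symm
    ![a 1 * b 2 - a 2 * b 1, a 2 * b 0 - a 0 * b 2, a 0 * b 1 - a 1 * b 0]

/-- The vector (x, y, z) ∈ ℝ³. -/
noncomputable def v3 (x y z : ℝ) : EuclideanSpace ℝ (Fin 3) :=
  (WithLp.equiv 2 (Fin 3 → ℝ)).symm ![x, y, z]

/-!
Take a unit vector `u ⟂ h` with `e = ‖e‖ • u` (any unit vector orthogonal to `h` if `e = 0`), and
put `r₀ = b⁻¹ • u`, `v₀ = b • (h × u)` for a scale `b > 0`. By the BAC–CAB rule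
`r₀ × v₀ = u × (h × u) = h` and `v₀ × h = b ‖h‖² u`, so the eccentricity vector is
`(b ‖h‖² / μ - 1) • u`, which equals `e` for `b = μ (1 + ‖e‖) / ‖h‖²`.
-/

section Cross3

variable (a b c : EuclideanSpace ℝ (Fin 3))

@[simp] lemma cross3_apply_zero : cross3 a b 0 = a 1 * b 2 - a 2 * b 1 := rfl
@[simp] lemma cross3_apply_one : cross3 a b 1 = a 2 * b 0 - a 0 * b 2 := rfl
@[simp] lemma cross3_apply_two : cross3 a b 2 = a 0 * b 1 - a 1 * b 0 := rfl

lemma cross3_anticomm : cross3 b a = -cross3 a b := by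
  ext i; fin_cases i <;> simp <;> ring

lemma cross3_smul_left (t : ℝ) : cross3 (t • a) b = t • cross3 a b := by
  ext i; fin_cases i <;> simp <;> ring

lemma cross3_smul_right (t : ℝ) : cross3 a (t • b) = t • cross3 a b := by
  ext i; fin_cases i <;> simp <;> ring

lemma cross3_cross3 : cross3 a (cross3 b c) = ⟪a, c⟫_ℝ • b - ⟪a, b⟫_ℝ • c := by
  ext i; fin_cases i <;> simp [PiLp.inner_apply, Fin.sum_univ_three] <;> ring

end Cross3

lemma exists_norm_eq_one_inner_eq_zero {E : Type*} [NormedAddCommGroup E] [InnerProductSpace ℝ E]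
    [FiniteDimensional ℝ E] (hE : 2 ≤ Module.finrank ℝ E) (h : E) :
    ∃ u : E, ‖u‖ = 1 ∧ ⟪h, u⟫_ℝ = 0 := by
  have hspan : Module.finrank ℝ (ℝ ∙ h) ≤ 1 := by
    simpa using finrank_span_le_card ({h} : Set E)
  have hpos : 0 < Module.finrank ℝ (ℝ ∙ h)ᗮ := by
    have := Submodule.finrank_add_finrank_orthogonal (ℝ ∙ h)
    omega
  obtain ⟨w, hw, hw0⟩ :=
    Submodule.exists_mem_ne_zero_of_ne_bot (Submodule.one_le_finrank_iff.mp hpos)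
  refine ⟨‖w‖⁻¹ • w, norm_smul_inv_norm hw0, ?_⟩
  rw [inner_smul_right, Submodule.mem_orthogonal_singleton_iff_inner_right.mp hw, mul_zero]

lemma exists_norm_eq_one_inner_eq_zero_and_eq_norm_smul {E : Type*} [NormedAddCommGroup E]
    [InnerProductSpace ℝ E] [FiniteDimensional ℝ E] (hE : 2 ≤ Module.finrank ℝ E) {h e : E}
    (he : ⟪h, e⟫_ℝ = 0) : ∃ u : E, ‖u‖ = 1 ∧ ⟪h, u⟫_ℝ = 0 ∧ e = ‖e‖ • u := by
  by_cases he0 : e = 0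
  · obtain ⟨u, hu, hhu⟩ := exists_norm_eq_one_inner_eq_zero hE h
    exact ⟨u, hu, hhu, by simp [he0]⟩
  · refine ⟨‖e‖⁻¹ • e, norm_smul_inv_norm he0, by rw [inner_smul_right, he, mul_zero], ?_⟩
    rw [smul_inv_smul₀ (norm_ne_zero_iff.mpr he0)]

lemma cross3_cross3_eq_of_norm_eq_one {h u : EuclideanSpace ℝ (Fin 3)} (hu : ‖u‖ = 1)
    (hhu : ⟪h, u⟫_ℝ = 0) : cross3 u (cross3 h u) = h := by
  rw [cross3_cross3, real_inner_self_eq_norm_sq, hu, real_inner_comm, hhu]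
  simp

lemma cross3_cross3_self_eq_norm_sq_smul {h u : EuclideanSpace ℝ (Fin 3)} (hhu : ⟪h, u⟫_ℝ = 0) :
    cross3 (cross3 h u) h = ‖h‖ ^ 2 • u := by
  rw [cross3_anticomm, cross3_cross3, hhu, real_inner_self_eq_norm_sq]
  simp

/-- Realizability of orbital elements: any pair of mutually orthogonal vectors h ≠ 0, e
arises as the angular momentum and eccentricity vector of some initial position r₀ ≠ 0
and velocity v₀. -/
theorem orbital_elements_realizable
    (μ : ℝ) (hμ : 0 < μ) (h e : EuclideanSpace ℝ (Fin 3))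
    (hh : h ≠ 0) (horth : ⟪h, e⟫_ℝ = 0) :
    ∃ r₀ v₀ : EuclideanSpace ℝ (Fin 3), r₀ ≠ 0 ∧ cross3 r₀ v₀ = h ∧
      μ⁻¹ • cross3 v₀ (cross3 r₀ v₀) - ‖r₀‖⁻¹ • r₀ = e := by
  obtain ⟨u, hu, hhu, he⟩ :=
    exists_norm_eq_one_inner_eq_zero_and_eq_norm_smul (by simp) horth
  set b := μ * (1 + ‖e‖) / ‖h‖ ^ 2
  have hb : 0 < b := by positivity
  have hangular : cross3 (b⁻¹ • u) (b • cross3 h u) = h := by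
    rw [cross3_smul_left, cross3_smul_right, smul_smul, inv_mul_cancel₀ hb.ne', one_smul,
      cross3_cross3_eq_of_norm_eq_one hu hhu]
  have hr₀ : ‖b⁻¹ • u‖⁻¹ • b⁻¹ • u = u := by
    rw [norm_smul, hu, mul_one, Real.norm_of_nonneg (inv_nonneg.mpr hb.le), inv_inv,
      smul_inv_smul₀ hb.ne']
  have hcoeff : μ⁻¹ * b * ‖h‖ ^ 2 - 1 = ‖e‖ := by
    have : ‖h‖ ≠ 0 := norm_ne_zero_iff.mpr hh
    simp only [b]
    field_simp
    ring
  refine ⟨b⁻¹ • u, b • cross3 h u, smul_ne_zero (inv_ne_zero hb.ne') ?_, hangular, ?_⟩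
  · exact norm_ne_zero_iff.mp (hu ▸ one_ne_zero)
  rw [hangular, cross3_smul_left, cross3_cross3_self_eq_norm_sq_smul hhu, hr₀, smul_smul,
    smul_smul, he, ← hcoeff, sub_smul, one_smul]
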